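/- For 0<q<1, positive integers n,k with k≤n, and a nonnegative integer a, the following summation identity holds: ([n-1 choose k]_q/[n-1+k choose k]_q) · ∑_{l=0}^{a} ([n]_q^{2l}/[k]_q^{2l}) q^{(k-n)l} = ([n choose k]_q/[n+k choose k]_q) · ( ([n]_q^{2a}/[k]_q^{2a}) q^{(k-n)a} − ([k]_q^2/[n]_q^2) q^{n-k} ). -/

import Mathlib

open Finset

/-- q-analogue of a natural number: [m]_q = (1-q^m)/(1-q). -/
noncomputable def qnum (q : ℝ) (m : ℕ) : ℝ := (1 - q ^ m) / (1 - q)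

/-- q-Pochhammer (q;q)_n = ∏_{k=0}^{n-1} (1 - q^{k+1}). -/
noncomputable def qPoch (q : ℝ) (n : ℕ) : ℝ := ∏ k ∈ Finset.range n, (1 - q ^ (k + 1))

/-- Gaussian q-binomial coefficient, 0 when m > n. -/
noncomputable def qbinom (q : ℝ) (n m : ℕ) : ℝ :=
  if m ≤ n then qPoch q n / (qPoch q m * qPoch q (n - m)) else 0

/-- q-multiple harmonic star sum H_n^*[s₁,…,s_m]. -/
noncomputable def qHstar (q : ℝ) : List ℕ → ℕ → ℝ
  | [], _ => 1
  | s :: rest, n => ∑ k ∈ Finset.Icc 1 n, q ^ k / qnum q k ^ s * qHstar q rest k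

/-- q-multiple zeta star value ζ_q^*[s₁,…,s_m]. -/
noncomputable def qZetaStar (q : ℝ) : List ℕ → ℝ
  | [] => 1
  | s :: rest => ∑' k : ℕ, q ^ (k + 1) / qnum q (k + 1) ^ s * qHstar q rest (k + 1)

/-- strict multiple harmonic sum ∑_{n ≥ k₁ > … > k_r ≥ 1} ∏ 1/k_j^{p_j}. -/
noncomputable def Hstrict : List ℕ → ℕ → ℝ
  | [], _ => 1
  | p :: rest, n => ∑ k ∈ Finset.Icc 1 n, (1 : ℝ) / (k : ℝ) ^ p * Hstrict rest (k - 1)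

/-- binomial-weighted strict multiple harmonic sum Ĥ_n(p). -/
noncomputable def Hhat : List ℕ → ℕ → ℝ
  | [], _ => 1
  | p :: rest, n => ∑ k ∈ Finset.Icc 1 n,
      ((n.choose k : ℝ) / ((n + k).choose n)) * ((1 : ℝ) / (k : ℝ) ^ p) * Hstrict rest (k - 1)

/-- ordinary multiple harmonic star sum H_n^*(s₁,…,s_m). -/
noncomputable def HstarO : List ℕ → ℕ → ℝ
  | [], _ => 1
  | s :: rest, n => ∑ k ∈ Finset.Icc 1 n, (1 : ℝ) / (k : ℝ) ^ s * HstarO rest k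

/-- ordinary multiple zeta star value. -/
noncomputable def zetaStarO : List ℕ → ℝ
  | [] => 1
  | s :: rest => ∑' k : ℕ, (1 : ℝ) / ((k : ℝ) + 1) ^ s * HstarO rest (k + 1)

/-- Merge a list of parts according to a comma(true)/plus(false) pattern. -/
def mergeComp : ℕ → List ℕ → List Bool → List ℕ
  | a, [], _ => [a]
  | a, _ :: _, [] => [a]
  | a, b :: t, true :: bs => a :: mergeComp b t bs
  | a, b :: t, false :: bs => mergeComp (a + b) t bs


/-!
Write `R n = [n choose k]_q / [n+k choose k]_q` and `x = [n]_q² / ([k]_q² q^(n-k))`. Since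
`(1 - q^n)² - q^(n-k) (1 - q^k)² = (1 - q^(n-k)) (1 - q^(n+k))`, comparing the q-Pochhammer
products gives `R (n-1) · x = R n · (x - 1)`; multiplying the geometric sum `∑_{l ≤ a} x^l` by
`x` then telescopes it to `R n · (x^a - x⁻¹)`.
-/

lemma mul_geom_sum_eq_of_mul_eq {K : Type*} [Field K] {c d x : K} (hx : x ≠ 0)
    (h : c * x = d * (x - 1)) (a : ℕ) :
    c * ∑ l ∈ range (a + 1), x ^ l = d * (x ^ a - x⁻¹) := by
  apply mul_right_cancel₀ hx
  calc c * (∑ l ∈ range (a + 1), x ^ l) * x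
      = c * x * ∑ l ∈ range (a + 1), x ^ l := by ring
    _ = d * ((∑ l ∈ range (a + 1), x ^ l) * (x - 1)) := by rw [h]; ring
    _ = d * (x ^ a - x⁻¹) * x := by
        rw [geom_sum_mul, pow_succ, mul_assoc d, sub_mul, inv_mul_cancel₀ hx]

lemma one_sub_pow_sq_sub_mul {R : Type*} [CommRing R] (q : R) {n k : ℕ} (hkn : k ≤ n) :
    (1 - q ^ n) ^ 2 - q ^ (n - k) * (1 - q ^ k) ^ 2 = (1 - q ^ (n - k)) * (1 - q ^ (n + k)) := by
  obtain ⟨m, rfl⟩ := Nat.exists_eq_add_of_le hkn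
  simp only [Nat.add_sub_cancel_left]
  ring

lemma qPoch_succ (q : ℝ) (n : ℕ) : qPoch q (n + 1) = qPoch q n * (1 - q ^ (n + 1)) :=
  prod_range_succ _ _

lemma one_sub_pow_ne_zero {q : ℝ} (hq : |q| < 1) {j : ℕ} (hj : j ≠ 0) : 1 - q ^ j ≠ 0 := by
  have : |q ^ j| < 1 := abs_pow q j ▸ pow_lt_one₀ (abs_nonneg q) hq hj
  exact sub_ne_zero.2 (lt_of_abs_lt this).ne'

lemma qnum_ne_zero {q : ℝ} (hq : |q| < 1) {m : ℕ} (hm : m ≠ 0) : qnum q m ≠ 0 :=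
  div_ne_zero (one_sub_pow_ne_zero hq hm) (pow_one q ▸ one_sub_pow_ne_zero hq one_ne_zero)

lemma qPoch_ne_zero {q : ℝ} (hq : |q| < 1) (n : ℕ) : qPoch q n ≠ 0 :=
  prod_ne_zero_iff.2 fun i _ => one_sub_pow_ne_zero hq (Nat.succ_ne_zero i)

lemma qbinom_eq_zero_of_lt (q : ℝ) {n k : ℕ} (h : n < k) : qbinom q n k = 0 :=
  if_neg (not_le.2 h)

lemma qbinom_div_qbinom_add {q : ℝ} (hq : |q| < 1) {n k : ℕ} (hkn : k ≤ n) :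
    qbinom q n k / qbinom q (n + k) k = qPoch q n ^ 2 / (qPoch q (n - k) * qPoch q (n + k)) := by
  have hk := qPoch_ne_zero hq k
  have hn := qPoch_ne_zero hq n
  rw [qbinom, qbinom, if_pos hkn, if_pos (Nat.le_add_left k n), Nat.add_sub_cancel]
  field_simp

-- Thanks to truncated subtraction this also holds for `n < k`, where both sides vanish.
lemma qbinom_div_qbinom_add_succ {q : ℝ} (hq : |q| < 1) (n k : ℕ) :
    qbinom q (n + 1) k / qbinom q (n + 1 + k) k * ((1 - q ^ (n + 1 - k)) * (1 - q ^ (n + 1 + k)))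
      = qbinom q n k / qbinom q (n + k) k * (1 - q ^ (n + 1)) ^ 2 := by
  rcases lt_or_ge n k with hnk | hkn
  · rw [qbinom_eq_zero_of_lt q hnk, zero_div, zero_mul, Nat.sub_eq_zero_of_le hnk, pow_zero, sub_self, zero_mul, mul_zero]
  · rw [qbinom_div_qbinom_add hq hkn, qbinom_div_qbinom_add hq (hkn.trans n.le_succ),
      Nat.succ_sub hkn, Nat.add_right_comm n 1 k, qPoch_succ, qPoch_succ, qPoch_succ]
    have := qPoch_ne_zero hq (n - k)
    have := qPoch_ne_zero hq (n + k)
    have := one_sub_pow_ne_zero hq (Nat.succ_ne_zero (n - k))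
    have := one_sub_pow_ne_zero hq (Nat.succ_ne_zero (n + k))
    field_simp

lemma qbinom_div_qbinom_add_pred_mul {q : ℝ} (hq : |q| < 1) (hq0 : q ≠ 0) {n k : ℕ}
    (hk : 1 ≤ k) (hkn : k ≤ n) :
    qbinom q (n - 1) k / qbinom q (n - 1 + k) k * (qnum q n ^ 2 / (qnum q k ^ 2 * q ^ (n - k)))
      = qbinom q n k / qbinom q (n + k) k * (qnum q n ^ 2 / (qnum q k ^ 2 * q ^ (n - k)) - 1) := by
  obtain ⟨m, rfl⟩ : ∃ m, n = m + 1 := Nat.exists_eq_add_one.2 (hk.trans hkn)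
  have step := qbinom_div_qbinom_add_succ hq m k
  rw [← one_sub_pow_sq_sub_mul q hkn] at step
  have h1q : 1 - q ≠ 0 := pow_one q ▸ one_sub_pow_ne_zero hq one_ne_zero
  have hqk := one_sub_pow_ne_zero hq (by omega : k ≠ 0)
  have hqnk : q ^ (m + 1 - k) ≠ 0 := pow_ne_zero _ hq0
  simp only [qnum, Nat.add_sub_cancel]
  generalize qbinom q m k / qbinom q (m + k) k = r₀ at step ⊢
  generalize qbinom q (m + 1) k / qbinom q (m + 1 + k) k = r₁ at step ⊢
  field_simp
  linear_combination -step

theorem stmt8_general (q : ℝ) (hq0 : 0 < q) (hq1 : q < 1) (n k a : ℕ) (hk : 1 ≤ k)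
    (hkn : k ≤ n) :
    (qbinom q (n - 1) k / qbinom q (n - 1 + k) k) *
      ∑ l ∈ Finset.range (a + 1), qnum q n ^ (2 * l) / (qnum q k ^ (2 * l) * q ^ ((n - k) * l))
    = (qbinom q n k / qbinom q (n + k) k) *
        (qnum q n ^ (2 * a) / (qnum q k ^ (2 * a) * q ^ ((n - k) * a))
          - qnum q k ^ 2 / qnum q n ^ 2 * q ^ (n - k)) := by
  set x := qnum q n ^ 2 / (qnum q k ^ 2 * q ^ (n - k))
  have hpow (l : ℕ) : qnum q n ^ (2 * l) / (qnum q k ^ (2 * l) * q ^ ((n - k) * l)) = x ^ l := by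
    rw [div_pow, mul_pow, ← pow_mul, ← pow_mul, ← pow_mul]
  have hinv : qnum q k ^ 2 / qnum q n ^ 2 * q ^ (n - k) = x⁻¹ := by
    rw [inv_div, div_mul_eq_mul_div, mul_div_assoc]
  have hq : |q| < 1 := abs_lt.2 ⟨by linarith, hq1⟩
  have hx : x ≠ 0 := div_ne_zero (pow_ne_zero _ (qnum_ne_zero hq (by omega)))
    (mul_ne_zero (pow_ne_zero _ (qnum_ne_zero hq (by omega))) (pow_ne_zero _ hq0.ne'))
  rw [sum_congr rfl fun l _ => hpow l, hpow, hinv]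
  exact mul_geom_sum_eq_of_mul_eq hx (qbinom_div_qbinom_add_pred_mul hq hq0.ne' hk hkn) a

theorem stmt8 (q : ℝ) (hq0 : 0 < q) (hq1 : q < 1) (n k a : ℕ) (hn : 1 ≤ n) (hk : 1 ≤ k)
    (hkn : k ≤ n) :
    (qbinom q (n - 1) k / qbinom q (n - 1 + k) k) *
      ∑ l ∈ Finset.range (a + 1), qnum q n ^ (2 * l) / (qnum q k ^ (2 * l) * q ^ ((n - k) * l))
    = (qbinom q n k / qbinom q (n + k) k) *
        (qnum q n ^ (2 * a) / (qnum q k ^ (2 * a) * q ^ ((n - k) * a))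
          - qnum q k ^ 2 / qnum q n ^ 2 * q ^ (n - k)) :=
  stmt8_general q hq0 hq1 n k a hk hkn
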